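/- A timed automaton A has an accepting run if and only if there exists a symbolic run (q0, Z0) ⇒ (q1, Z1) ⇒ … ⇒ (qn, Zn) with qn ∈ Acc and Zn ≠ ∅ (taking n = 0 when q0 ∈ Acc). -/

import Mathlib

/-! Common framework: clocks, valuations, guards, zones, timed automata,
LU-bounds and LU-abstraction, following the paper's definitions. -/

abbrev Val (X : Type*) := X → NNReal

/-- Time delay: `v + δ`. -/
def delay {X : Type*} (v : Val X) (δ : NNReal) : Val X := fun x => v x + δ

open Classical in
/-- Reset `[R]v`. -/
noncomputable def resetV {X : Type*} (R : Set X) (v : Val X) : Val X :=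
  fun x => if x ∈ R then 0 else v x

/-- The valuation `0̄`. -/
def zeroVal (X : Type*) : Val X := fun _ => 0

/-- Comparison operators for atomic clock constraints. -/
inductive Cmp where
  | lt | le | eq | ge | gt

/-- Satisfaction of `a # c`. -/
def Cmp.sat : Cmp → NNReal → ℕ → Prop
  | .lt, a, c => a < (c : NNReal)
  | .le, a, c => a ≤ (c : NNReal)
  | .eq, a, c => a = (c : NNReal)
  | .ge, a, c => (c : NNReal) ≤ a
  | .gt, a, c => (c : NNReal) < a

/-- An atomic clock constraint `x # c`. -/
structure Atomic (X : Type*) where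
  clock : X
  cmp : Cmp
  bound : ℕ

/-- A guard is a finite conjunction of atomic constraints. -/
abbrev Guard (X : Type*) := List (Atomic X)

/-- `v ⊨ g`. -/
def satG {X : Type*} (v : Val X) (g : Guard X) : Prop :=
  ∀ a ∈ g, a.cmp.sat (v a.clock) a.bound

/-- Lower-bound constraints: `x > c` or `x ≥ c`. -/
def Atomic.isLower {X : Type*} (a : Atomic X) : Prop := a.cmp = Cmp.gt ∨ a.cmp = Cmp.ge

/-- Upper-bound constraints: `x < c` or `x ≤ c`. -/
def Atomic.isUpper {X : Type*} (a : Atomic X) : Prop := a.cmp = Cmp.lt ∨ a.cmp = Cmp.le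

/-- A set `W` of valuations is time-elapsed. -/
def TimeElapsed {X : Type*} (W : Set (Val X)) : Prop :=
  ∀ v ∈ W, ∀ δ : NNReal, delay v δ ∈ W

/-- `Post_{g,R}(W) = { [R]v + δ | v ∈ W, v ⊨ g, δ ∈ ℝ≥0 }`. -/
def post {X : Type*} (g : Guard X) (R : Set X) (W : Set (Val X)) : Set (Val X) :=
  { w | ∃ v ∈ W, satG v g ∧ ∃ δ : NNReal, w = delay (resetV R v) δ }

/-- LU-bounds take values in `ℕ ∪ {−∞}`. -/
abbrev Bnd := WithBot ℕ

/-- `b < r` where `b ∈ ℕ ∪ {−∞}` and `r ∈ ℝ≥0` (every real is greater than `−∞`). -/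
def Bnd.ltVal (b : Bnd) (r : NNReal) : Prop :=
  ∀ n : ℕ, b = (n : Bnd) → (n : NNReal) < r

/-- The LU-preorder `v ⊑_LU v'`. -/
def luLe {X : Type*} (L U : X → Bnd) (v v' : Val X) : Prop :=
  ∀ x, (v' x < v x → Bnd.ltVal (L x) (v' x)) ∧ (v x < v' x → Bnd.ltVal (U x) (v x))

/-- `a_LU(W)`. -/
def aLU {X : Type*} (L U : X → Bnd) (W : Set (Val X)) : Set (Val X) :=
  { v | ∃ v' ∈ W, luLe L U v v' }

/-- A timed automaton `(Q, q0, X, T, Acc)` (finiteness of `Q`, `X`, `trans`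
is imposed as hypotheses of the theorems). -/
structure TA (Q X : Type*) where
  q0 : Q
  trans : Set (Q × Guard X × Set X × Q)
  acc : Set Q

/-- One delay or action transition between configurations. -/
def step {Q X : Type*} (A : TA Q X) (c c' : Q × Val X) : Prop :=
  (c'.1 = c.1 ∧ ∃ δ : NNReal, c'.2 = delay c.2 δ) ∨
  (∃ g R, (c.1, g, R, c'.1) ∈ A.trans ∧ satG c.2 g ∧ c'.2 = resetV R c.2)

/-- There is a run (finite alternating sequence of delay and action transitions)
from `c` to `c'`. -/
def Reach {Q X : Type*} (A : TA Q X) : (Q × Val X) → (Q × Val X) → Prop :=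
  Relation.ReflTransGen (step A)

/-- Symbolic transition `(q,W) ⇒^t (q', Post_t(W))`, union over all `t ∈ T`. -/
def symbStep {Q X : Type*} (A : TA Q X) (p p' : Q × Set (Val X)) : Prop :=
  ∃ g R, (p.1, g, R, p'.1) ∈ A.trans ∧ p'.2 = post g R p.2

/-- The initial zone `Z0 = { 0̄ + δ | δ ∈ ℝ≥0 }`. -/
def Z0 (X : Type*) : Set (Val X) := { v | ∃ δ : NNReal, v = delay (zeroVal X) δ }

/-- Time-abstract simulation for `A`. -/
def IsTASim {Q X : Type*} (A : TA Q X) (S : (Q × Val X) → (Q × Val X) → Prop) : Prop :=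
  (∀ c c', S c c' → c.1 = c'.1) ∧
  (∀ (q : Q) (v v' : Val X) (δ : NNReal) (g : Guard X) (R : Set X) (q1 : Q),
    S (q, v) (q, v') → (q, g, R, q1) ∈ A.trans → satG (delay v δ) g →
    ∃ δ' : NNReal, satG (delay v' δ') g ∧
      S (q1, resetV R (delay v δ)) (q1, resetV R (delay v' δ')))

/-- Abstraction induced by a preorder `≼` on valuations. -/
def aAbs {X : Type*} (pre : Val X → Val X → Prop) (W : Set (Val X)) : Set (Val X) :=
  { v | ∃ v' ∈ W, pre v v' }

/-- Abstract transition `(q,W) ⇒_a (q', a(W'))` whenever `W = a(W)` and `(q,W) ⇒ (q',W')`. -/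
def absStep {Q X : Type*} (A : TA Q X) (pre : Val X → Val X → Prop)
    (p p' : Q × Set (Val X)) : Prop :=
  p.2 = aAbs pre p.2 ∧ ∃ W', symbStep A p (p'.1, W') ∧ p'.2 = aAbs pre W'

/-
A concrete run can be followed inside the symbolic run that takes the same action transitions:
the zones stay closed under time elapse, so delays never leave the current zone. Conversely,
every valuation in `Post_{g,R}(W)` is, by definition, a delay after taking `(g, R)` from some
valuation of `W`, so each symbolic step can be traced back to a concrete one.
-/

@[simp]
lemma delay_delay {X : Type*} (v : Val X) (δ δ' : NNReal) :
    delay (delay v δ) δ' = delay v (δ + δ') := by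
  funext x
  simp [delay, add_assoc]

@[simp]
lemma delay_zero {X : Type*} (v : Val X) : delay v 0 = v := by
  funext x
  simp [delay]

lemma timeElapsed_post {X : Type*} (g : Guard X) (R : Set X) (W : Set (Val X)) :
    TimeElapsed (post g R W) := by
  rintro w ⟨v, hv, hg, δ, rfl⟩ δ'
  exact ⟨v, hv, hg, δ + δ', delay_delay _ _ _⟩

lemma timeElapsed_Z0 (X : Type*) : TimeElapsed (Z0 X) := by
  rintro v ⟨δ, rfl⟩ δ'
  exact ⟨δ + δ', delay_delay _ _ _⟩

lemma zeroVal_mem_Z0 (X : Type*) : zeroVal X ∈ Z0 X :=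
  ⟨0, (delay_zero _).symm⟩

lemma mem_post {X : Type*} {g : Guard X} {R : Set X} {W : Set (Val X)} {v : Val X}
    (hv : v ∈ W) (hg : satG v g) : resetV R v ∈ post g R W :=
  ⟨v, hv, hg, 0, (delay_zero _).symm⟩

section Runs

variable {Q X : Type*} (A : TA Q X)

lemma step_delay (q : Q) (v : Val X) (δ : NNReal) : step A (q, v) (q, delay v δ) :=
  Or.inl ⟨rfl, δ, rfl⟩

lemma step_action {q q' : Q} {g : Guard X} {R : Set X} (ht : (q, g, R, q') ∈ A.trans)
    {v : Val X} (hg : satG v g) : step A (q, v) (q', resetV R v) :=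
  Or.inr ⟨g, R, ht, hg, rfl⟩

lemma reach_Z0 (q : Q) {v : Val X} (hv : v ∈ Z0 X) : Reach A (q, zeroVal X) (q, v) := by
  obtain ⟨δ, rfl⟩ := hv
  exact .single (step_delay A q _ δ)

lemma exists_symbStep_run_of_reach {c c' : Q × Val X} (hrun : Reach A c c')
    {W : Set (Val X)} (hv : c.2 ∈ W) (hW : TimeElapsed W) :
    ∃ W', Relation.ReflTransGen (symbStep A) (c.1, W) (c'.1, W') ∧
      c'.2 ∈ W' ∧ TimeElapsed W' := by
  induction hrun with
  | refl => exact ⟨W, .refl, hv, hW⟩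
  | tail _ hstep ih =>
    obtain ⟨W', hsymb, hv', hW'⟩ := ih
    rcases hstep with ⟨hq, δ, hδ⟩ | ⟨g, R, ht, hg, hreset⟩
    · exact ⟨W', hq ▸ hsymb, hδ ▸ hW' _ hv' δ, hW'⟩
    · exact ⟨post g R W', hsymb.tail ⟨g, R, ht, rfl⟩, hreset ▸ mem_post hv' hg,
        timeElapsed_post g R W'⟩

lemma exists_reach_of_symbStep_run {p p' : Q × Set (Val X)}
    (hrun : Relation.ReflTransGen (symbStep A) p p') {v' : Val X} (hv' : v' ∈ p'.2) :
    ∃ v ∈ p.2, Reach A (p.1, v) (p'.1, v') := by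
  induction hrun generalizing v' with
  | refl => exact ⟨v', hv', .refl⟩
  | tail _ hstep ih =>
    obtain ⟨g, R, ht, hpost⟩ := hstep
    obtain ⟨u, hu, hg, δ, rfl⟩ := hpost ▸ hv'
    obtain ⟨v, hv, hreach⟩ := ih hu
    exact ⟨v, hv, (hreach.tail (step_action A ht hg)).tail (step_delay A _ _ δ)⟩

end Runs

theorem stmt_6_general {Q X : Type*} (A : TA Q X) :
    (∃ (q : Q) (v : Val X), Reach A (A.q0, zeroVal X) (q, v) ∧ q ∈ A.acc) ↔
    (∃ (q : Q) (Z : Set (Val X)),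
      Relation.ReflTransGen (symbStep A) (A.q0, Z0 X) (q, Z) ∧
      q ∈ A.acc ∧ Z ≠ (∅ : Set (Val X))) := by
  constructor
  · rintro ⟨q, v, hreach, hacc⟩
    obtain ⟨Z, hsymb, hv, -⟩ :=
      exists_symbStep_run_of_reach A hreach (zeroVal_mem_Z0 X) (timeElapsed_Z0 X)
    exact ⟨q, Z, hsymb, hacc, Set.nonempty_iff_ne_empty.mp ⟨v, hv⟩⟩
  · rintro ⟨q, Z, hsymb, hacc, hZ⟩
    obtain ⟨v, hv⟩ := Set.nonempty_iff_ne_empty.mpr hZ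
    obtain ⟨u, hu, hreach⟩ := exists_reach_of_symbStep_run A hsymb hv
    exact ⟨q, v, (reach_Z0 A A.q0 hu).trans hreach, hacc⟩

/-- `A` has an accepting run iff there is a symbolic run from
`(q0, Z0)` to some `(q, Z)` with `q ∈ Acc` and `Z ≠ ∅`. -/
theorem stmt_6 {Q X : Type*} [Finite Q] [Finite X] (A : TA Q X) (hT : A.trans.Finite) :
    (∃ (q : Q) (v : Val X), Reach A (A.q0, zeroVal X) (q, v) ∧ q ∈ A.acc) ↔
    (∃ (q : Q) (Z : Set (Val X)),
      Relation.ReflTransGen (symbStep A) (A.q0, Z0 X) (q, Z) ∧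
      q ∈ A.acc ∧ Z ≠ (∅ : Set (Val X))) :=
  stmt_6_general A
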